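/- arXiv:math/0603481 — 2 statements merged into one kernel-verified Lean document; each statement's English description precedes it below -/
import Mathlib

section
/- Let a_n be the number of partitions of [n] avoiding the generalized pattern 12|3. Then a_0 = a_1 = 1 and for n ≥ 2, a_n = a_{n−1} + 1 + Σ_{k=1}^{n−2} C(n−2, k) a_{n−k−2}. -/
open Finset

structure SetPartition (n : ℕ) where
  blocks : Finset (Finset ℕ)
  nonempty_mem : ∀ B ∈ blocks, B.Nonempty
  disj : ∀ B ∈ blocks, ∀ C ∈ blocks, B ≠ C → Disjoint B C
  cover : blocks.sup id = Finset.Icc 1 n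

/-- `σ` contains the pattern `π`: there is an order-preserving choice of elements
and an injective assignment of blocks of `π` to distinct blocks of `σ`. -/
def SetPartition.Contains {n k : ℕ} (σ : SetPartition n) (π : SetPartition k) : Prop :=
  ∃ f : ℕ → ℕ, StrictMonoOn f (Finset.Icc 1 k : Set ℕ) ∧
    ∃ g : Finset ℕ → Finset ℕ,
      (∀ B ∈ π.blocks, g B ∈ σ.blocks) ∧
      (∀ B ∈ π.blocks, ∀ C ∈ π.blocks, g B = g C → B = C) ∧
      (∀ B ∈ π.blocks, ∀ x ∈ B, f x ∈ g B)

def SetPartition.Avoids {n k : ℕ} (σ : SetPartition n) (π : SetPartition k) : Prop :=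
  ¬ σ.Contains π

def pat1_2_3 : SetPartition 3 := ⟨{{1}, {2}, {3}}, by decide, by decide, by decide⟩
def pat1_23 : SetPartition 3 := ⟨{{1}, {2, 3}}, by decide, by decide, by decide⟩
def pat12_3 : SetPartition 3 := ⟨{{1, 2}, {3}}, by decide, by decide, by decide⟩
def pat13_2 : SetPartition 3 := ⟨{{1, 3}, {2}}, by decide, by decide, by decide⟩
def pat123 : SetPartition 3 := ⟨{{1, 2, 3}}, by decide, by decide, by decide⟩

/-- `B` and `C` are consecutive blocks of `σ` in the canonical order by minima,
with `B` immediately preceding `C`. -/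
def SetPartition.AdjacentBlocks {n : ℕ} (σ : SetPartition n) (B C : Finset ℕ) : Prop :=
  B ∈ σ.blocks ∧ C ∈ σ.blocks ∧ B.min < C.min ∧
    ∀ D ∈ σ.blocks, ¬ (B.min < D.min ∧ D.min < C.min)

/-- `σ` contains the generalized pattern `12|3`: a copy of `12/3` whose two blocks
occupy adjacent blocks of `σ` (in either order). -/
def SetPartition.Contains12Bar3 {n : ℕ} (σ : SetPartition n) : Prop :=
  ∃ B C : Finset ℕ, (σ.AdjacentBlocks B C ∨ σ.AdjacentBlocks C B) ∧
    ∃ a ∈ B, ∃ b ∈ B, ∃ c ∈ C, a < b ∧ b < c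

/-- The number of partitions of `[n]` avoiding the generalized pattern `12|3`. -/
noncomputable def a (n : ℕ) : ℕ :=
  ({σ : SetPartition n | ¬ σ.Contains12Bar3}).ncard

/-!
Partitions of any finite `S ⊆ ℕ` avoiding `12|3` are counted by `a #S`, because an
order-preserving relabelling preserves both the adjacency of blocks and the pattern. Let `n ≥ 2`.
If `{1}` is a block of an avoiding partition of `[n]`, removing it leaves an arbitrary avoiding
partition of `{2, …, n}`: this gives `a (n - 1)`. Otherwise the partition is either `{[n]}`, or
its first block is `{1} ∪ T` with `∅ ≠ T ⊆ {3, …, n}`, its second block is `{2}`, and the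
remaining blocks form an arbitrary avoiding partition of `{3, …, n} \ T`; there are
`C(n - 2, k)` such `T` with `k` elements, each contributing `a (n - k - 2)`.
-/

variable {α β : Type*}

namespace Finset

lemma coe_lt_min_iff [LinearOrder α] {k : α} {s : Finset α} :
    (k : WithTop α) < s.min ↔ ∀ x ∈ s, k < x := by
  rw [Finset.min, Finset.lt_inf_iff (WithTop.coe_lt_top k)]
  simp only [WithTop.coe_lt_coe]

lemma min_eq_coe [LinearOrder α] {k : α} {s : Finset α} (hk : k ∈ s) (h : ∀ x ∈ s, k ≤ x) :
    s.min = k :=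
  le_antisymm (min_le hk) (Finset.le_min fun x hx => WithTop.coe_le_coe.2 (h x hx))

lemma image_image_of_leftInvOn [DecidableEq α] [DecidableEq β] {f : α → β} {g : β → α}
    {s : Finset α} (h : Set.LeftInvOn g f s) : (s.image f).image g = s :=
  coe_injective (by push_cast; exact h.image_image)

lemma image_image_image_of_leftInvOn [DecidableEq α] [DecidableEq β] {f : α → β}
    {g : β → α} {s : Finset α} (h : Set.LeftInvOn g f s) {P : Finset (Finset α)}
    (hP : ∀ B ∈ P, B ⊆ s) : (P.image (image f)).image (image g) = P :=
  image_image_of_leftInvOn fun B hB => image_image_of_leftInvOn (h.mono (hP B hB))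

end Finset

/-- `IsSetPartition`, `IsAdjacent` and `Contains12Bar3` transcribe `SetPartition n`,
`SetPartition.AdjacentBlocks` and `SetPartition.Contains12Bar3` to an arbitrary finite ground
set, so that the partitions left after removing the first blocks can be counted. -/
structure IsSetPartition [DecidableEq α] (S : Finset α) (P : Finset (Finset α)) : Prop where
  nonempty : ∀ B ∈ P, B.Nonempty
  disjoint : ∀ B ∈ P, ∀ C ∈ P, B ≠ C → Disjoint B C
  sup_eq : P.sup id = S

namespace IsSetPartition

variable [DecidableEq α] {S : Finset α} {P : Finset (Finset α)} {B C : Finset α}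

lemma empty : IsSetPartition (∅ : Finset α) ∅ :=
  ⟨by simp, by simp, by simp⟩

lemma singleton (hS : S.Nonempty) : IsSetPartition S {S} :=
  ⟨by simpa, by simp_all, by simp⟩

protected lemma subset (hP : IsSetPartition S P) (hB : B ∈ P) : B ⊆ S :=
  hP.sup_eq ▸ le_sup (f := id) hB

lemma exists_mem (hP : IsSetPartition S P) {x : α} (hx : x ∈ S) : ∃ B ∈ P, x ∈ B := by
  rw [← hP.sup_eq] at hx
  simpa using mem_sup.1 hx

lemma eq_of_mem_of_mem (hP : IsSetPartition S P) (hB : B ∈ P) (hC : C ∈ P) {x : α}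
    (hxB : x ∈ B) (hxC : x ∈ C) : B = C := by
  by_contra h
  exact disjoint_left.1 (hP.disjoint B hB C hC h) hxB hxC

lemma eq_singleton_of_mem (hP : IsSetPartition S P) (hS : S ∈ P) : P = {S} := by
  refine eq_singleton_iff_unique_mem.2 ⟨hS, fun B hB => ?_⟩
  obtain ⟨x, hx⟩ := hP.nonempty B hB
  exact hP.eq_of_mem_of_mem hB hS hx (hP.subset hB hx)

lemma eq_empty (hP : IsSetPartition ∅ P) : P = ∅ :=
  eq_empty_of_forall_notMem fun B hB =>
    (hP.nonempty B hB).ne_empty (subset_empty.1 (hP.subset hB))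

protected lemma insert (hP : IsSetPartition S P) (hB : B.Nonempty) (hBS : Disjoint B S) :
    IsSetPartition (B ∪ S) (insert B P) := by
  have hdisj : ∀ D ∈ P, Disjoint B D := fun D hD => hBS.mono_right (hP.subset hD)
  refine ⟨?_, ?_, by rw [sup_insert, hP.sup_eq]; rfl⟩
  · simpa [hB] using hP.nonempty
  · simp only [mem_insert]
    rintro D (rfl | hD) E (rfl | hE) hDE
    · exact absurd rfl hDE
    · exact hdisj E hE
    · exact (hdisj D hD).symm
    · exact hP.disjoint D hD E hE hDE

protected lemma erase (hP : IsSetPartition S P) (hB : B ∈ P) :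
    IsSetPartition (S \ B) (P.erase B) := by
  refine ⟨fun D hD => hP.nonempty D (mem_of_mem_erase hD),
    fun D hD E hE => hP.disjoint D (mem_of_mem_erase hD) E (mem_of_mem_erase hE), ?_⟩
  ext x
  simp only [mem_sup, mem_erase, id, mem_sdiff, ← hP.sup_eq]
  constructor
  · rintro ⟨D, ⟨hDB, hD⟩, hxD⟩
    exact ⟨⟨D, hD, hxD⟩, fun hxB => hDB (hP.eq_of_mem_of_mem hD hB hxD hxB)⟩
  · rintro ⟨⟨D, hD, hxD⟩, hxB⟩
    exact ⟨D, ⟨fun h => hxB (h ▸ hxD), hD⟩, hxD⟩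

protected lemma image [DecidableEq β] {e : α → β} (hP : IsSetPartition S P)
    (he : Set.InjOn e S) : IsSetPartition (S.image e) (P.image (image e)) := by
  refine ⟨?_, ?_, ?_⟩
  · simpa using fun B hB => hP.nonempty B hB
  · simp only [mem_image]
    rintro _ ⟨B, hB, rfl⟩ _ ⟨C, hC, rfl⟩ hBC
    have hne : B ≠ C := by rintro rfl; exact hBC rfl
    rw [disjoint_left]
    rintro _ hx hx'
    obtain ⟨x, hxB, rfl⟩ := mem_image.1 hx
    obtain ⟨y, hyC, hxy⟩ := mem_image.1 hx'
    rw [he (hP.subset hC hyC) (hP.subset hB hxB) hxy] at hyC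
    exact disjoint_left.1 (hP.disjoint B hB C hC hne) hxB hyC
  · ext y
    simp only [mem_sup, id, ← hP.sup_eq, mem_image, exists_exists_and_eq_and]
    exact ⟨fun ⟨B, hB, x, hx, hxy⟩ => ⟨x, ⟨B, hB, hx⟩, hxy⟩,
      fun ⟨x, ⟨B, hB, hx⟩, hxy⟩ => ⟨B, hB, x, hx, hxy⟩⟩

end IsSetPartition

section Pattern

variable [LinearOrder α] {P Q : Finset (Finset α)} {B C B₀ : Finset α}

def Forms12_3 (B C : Finset α) : Prop :=
  ∃ a ∈ B, ∃ b ∈ B, ∃ c ∈ C, a < b ∧ b < c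

def IsAdjacent (P : Finset (Finset α)) (B C : Finset α) : Prop :=
  B ∈ P ∧ C ∈ P ∧ B.min < C.min ∧ ∀ D ∈ P, ¬ (B.min < D.min ∧ D.min < C.min)

def Contains12Bar3 (P : Finset (Finset α)) : Prop :=
  ∃ B C, (IsAdjacent P B C ∨ IsAdjacent P C B) ∧ Forms12_3 B C

lemma not_forms12_3_singleton_left (x : α) (C : Finset α) : ¬ Forms12_3 {x} C := by
  rintro ⟨a, ha, b, hb, -, -, hab, -⟩
  rw [mem_singleton] at ha hb
  exact (ha ▸ hb ▸ hab).false

lemma not_forms12_3_singleton_right {x : α} (h : ∀ y ∈ C, x < y) : ¬ Forms12_3 C {x} := by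
  rintro ⟨-, -, b, hb, c, hc, -, hbc⟩
  rw [mem_singleton] at hc
  exact (h b hb).asymm (hc ▸ hbc)

lemma not_contains12Bar3_of_subsingleton (hP : (P : Set (Finset α)).Subsingleton) :
    ¬ Contains12Bar3 P := by
  rintro ⟨B, C, hadj, -⟩
  rcases hadj with ⟨hB, hC, hlt, -⟩ | ⟨hC, hB, hlt, -⟩ <;>
    exact (hP (mem_coe.2 hB) (mem_coe.2 hC) ▸ hlt).false

lemma isAdjacent_insert_iff (hmin : ∀ D ∈ Q, B₀.min < D.min) (hB : B ∈ Q) (hC : C ∈ Q) :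
    IsAdjacent (insert B₀ Q) B C ↔ IsAdjacent Q B C := by
  simp only [IsAdjacent, mem_insert, forall_eq_or_imp, hB, hC, or_true, true_and]
  exact and_congr_right fun _ => and_iff_right fun h => (hmin B hB).asymm h.1

lemma IsAdjacent.of_insert (hmin : ∀ D ∈ Q, B₀.min < D.min)
    (h : IsAdjacent (insert B₀ Q) B C) : (B = B₀ ∧ C ∈ Q) ∨ IsAdjacent Q B C := by
  obtain ⟨hB, hC, hlt, -⟩ := id h
  have hCQ : C ∈ Q := by
    rcases mem_insert.1 hC with rfl | hC
    · rcases mem_insert.1 hB with rfl | hB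
      exacts [absurd hlt (lt_irrefl _), absurd hlt (hmin B hB).asymm]
    · exact hC
  rcases mem_insert.1 hB with rfl | hBQ
  · exact Or.inl ⟨rfl, hCQ⟩
  · exact Or.inr ((isAdjacent_insert_iff hmin hBQ hCQ).1 h)

lemma contains12Bar3_insert_iff (hmin : ∀ D ∈ Q, B₀.min < D.min)
    (hsucc : ∀ C ∈ Q, IsAdjacent (insert B₀ Q) B₀ C → ¬ Forms12_3 B₀ C ∧ ¬ Forms12_3 C B₀) :
    Contains12Bar3 (insert B₀ Q) ↔ Contains12Bar3 Q := by
  constructor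
  · rintro ⟨B, C, hadj, hpat⟩
    rcases hadj with h | h
    · rcases h.of_insert hmin with ⟨rfl, hC⟩ | h'
      exacts [absurd hpat (hsucc C hC h).1, ⟨B, C, Or.inl h', hpat⟩]
    · rcases h.of_insert hmin with ⟨rfl, hB⟩ | h'
      exacts [absurd hpat (hsucc B hB h).2, ⟨B, C, Or.inr h', hpat⟩]
  · rintro ⟨B, C, hadj, hpat⟩
    refine ⟨B, C, ?_, hpat⟩
    rcases hadj with h | h
    · exact Or.inl ((isAdjacent_insert_iff hmin h.1 h.2.1).2 h)
    · exact Or.inr ((isAdjacent_insert_iff hmin h.1 h.2.1).2 h)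

lemma contains12Bar3_insert_singleton_iff {x : α} (hx : ∀ D ∈ Q, ∀ y ∈ D, x < y) :
    Contains12Bar3 (insert {x} Q) ↔ Contains12Bar3 Q := by
  refine contains12Bar3_insert_iff (fun D hD => ?_) fun C hC _ =>
    ⟨not_forms12_3_singleton_left x C, not_forms12_3_singleton_right (hx C hC)⟩
  rw [min_singleton]
  exact coe_lt_min_iff.2 (hx D hD)

end Pattern

lemma IsSetPartition.isAdjacent_of_isLeast [LinearOrder α] {S B C : Finset α}
    {P : Finset (Finset α)} (hP : IsSetPartition S P) (hB : B ∈ P) (hC : C ∈ P) {m : α}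
    (hmC : m ∈ C) (hm : IsLeast ↑(S \ B) m) (hBm : B.min < m) : IsAdjacent P B C := by
  have hle : ∀ D ∈ P, D ≠ B → (m : WithTop α) ≤ D.min := fun D hD hDB =>
    Finset.le_min fun x hx => WithTop.coe_le_coe.2 <| hm.2 <| mem_coe.2 <|
      mem_sdiff.2 ⟨hP.subset hD hx, fun hxB => hDB (hP.eq_of_mem_of_mem hD hB hx hxB)⟩
  have hCB : C ≠ B := fun h => (mem_sdiff.1 hm.1).2 (h ▸ hmC)
  have hCm : C.min = m := le_antisymm (min_le hmC) (hle C hC hCB)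
  refine ⟨hB, hC, hCm ▸ hBm, fun D hD ⟨hBD, hDC⟩ => ?_⟩
  obtain rfl | hDB := eq_or_ne D B
  · exact hBD.false
  · exact (hle D hD hDB).not_gt (hCm ▸ hDC)

section Transport

variable [LinearOrder α] [LinearOrder β] {e : α → β} {S : Finset α} {P : Finset (Finset α)}
  {B C : Finset α}

lemma min_image_eq (he : StrictMonoOn e S) (hBS : B ⊆ S) (hB : B.Nonempty) :
    (B.image e).min = e (B.min' hB) :=
  min_eq_coe (mem_image_of_mem e (min'_mem B hB)) <| forall_mem_image.2 fun x hx =>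
    he.monotoneOn (hBS (min'_mem B hB)) (hBS hx) (min'_le B x hx)

lemma min_image_lt_min_image_iff (he : StrictMonoOn e S) (hBS : B ⊆ S) (hCS : C ⊆ S)
    (hB : B.Nonempty) (hC : C.Nonempty) :
    (B.image e).min < (C.image e).min ↔ B.min < C.min := by
  rw [min_image_eq he hBS hB, min_image_eq he hCS hC, ← coe_min' hB, ← coe_min' hC,
    WithTop.coe_lt_coe, WithTop.coe_lt_coe]
  exact he.lt_iff_lt (hBS (min'_mem B hB)) (hCS (min'_mem C hC))

lemma forms12_3_image_iff (he : StrictMonoOn e S) (hBS : B ⊆ S) (hCS : C ⊆ S) :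
    Forms12_3 (B.image e) (C.image e) ↔ Forms12_3 B C := by
  simp only [Forms12_3, exists_mem_image]
  constructor
  · rintro ⟨a, ha, b, hb, c, hc, hab, hbc⟩
    exact ⟨a, ha, b, hb, c, hc, (he.lt_iff_lt (hBS ha) (hBS hb)).1 hab,
      (he.lt_iff_lt (hBS hb) (hCS hc)).1 hbc⟩
  · rintro ⟨a, ha, b, hb, c, hc, hab, hbc⟩
    exact ⟨a, ha, b, hb, c, hc, he (hBS ha) (hBS hb) hab, he (hBS hb) (hCS hc) hbc⟩

lemma isAdjacent_image_iff (he : StrictMonoOn e S) (hP : IsSetPartition S P) (hB : B ∈ P)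
    (hC : C ∈ P) :
    IsAdjacent (P.image (image e)) (B.image e) (C.image e) ↔ IsAdjacent P B C := by
  have hlt : ∀ {D E}, D ∈ P → E ∈ P → ((D.image e).min < (E.image e).min ↔ D.min < E.min) :=
    fun hD hE => min_image_lt_min_image_iff he (hP.subset hD) (hP.subset hE)
      (hP.nonempty _ hD) (hP.nonempty _ hE)
  simp only [IsAdjacent, mem_image_of_mem _ hB, mem_image_of_mem _ hC, hB, hC, true_and,
    forall_mem_image]
  exact and_congr (hlt hB hC) <| forall₂_congr fun D hD => by rw [hlt hB hD, hlt hD hC]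

lemma contains12Bar3_image_iff (he : StrictMonoOn e S) (hP : IsSetPartition S P) :
    Contains12Bar3 (P.image (image e)) ↔ Contains12Bar3 P := by
  have hpat : ∀ {D E}, D ∈ P → E ∈ P → (Forms12_3 (D.image e) (E.image e) ↔ Forms12_3 D E) :=
    fun hD hE => forms12_3_image_iff he (hP.subset hD) (hP.subset hE)
  constructor
  · rintro ⟨B', C', hadj, hBC⟩
    have hB' : B' ∈ P.image (image e) := by rcases hadj with h | h; exacts [h.1, h.2.1]
    have hC' : C' ∈ P.image (image e) := by rcases hadj with h | h; exacts [h.2.1, h.1]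
    obtain ⟨B, hB, rfl⟩ := mem_image.1 hB'
    obtain ⟨C, hC, rfl⟩ := mem_image.1 hC'
    refine ⟨B, C, ?_, (hpat hB hC).1 hBC⟩
    rwa [isAdjacent_image_iff he hP hB hC, isAdjacent_image_iff he hP hC hB] at hadj
  · rintro ⟨B, C, hadj, hBC⟩
    have hB : B ∈ P := by rcases hadj with h | h; exacts [h.1, h.2.1]
    have hC : C ∈ P := by rcases hadj with h | h; exacts [h.2.1, h.1]
    refine ⟨B.image e, C.image e, ?_, (hpat hB hC).2 hBC⟩
    rwa [isAdjacent_image_iff he hP hB hC, isAdjacent_image_iff he hP hC hB]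

end Transport

section Avoiders

variable [LinearOrder α] [LinearOrder β] {S : Finset α} {P : Finset (Finset α)}

open scoped Classical in
noncomputable def avoiders (S : Finset α) : Finset (Finset (Finset α)) :=
  S.powerset.powerset.filter fun P => IsSetPartition S P ∧ ¬ Contains12Bar3 P

lemma mem_avoiders : P ∈ avoiders S ↔ IsSetPartition S P ∧ ¬ Contains12Bar3 P := by
  simp only [avoiders, mem_filter, mem_powerset, and_iff_right_iff_imp]
  exact fun h _ hB => mem_powerset.2 (h.1.subset hB)

lemma avoiders_empty : avoiders (∅ : Finset α) = {∅} := by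
  ext P
  rw [mem_avoiders, mem_singleton]
  refine ⟨fun h => h.1.eq_empty, ?_⟩
  rintro rfl
  exact ⟨IsSetPartition.empty, not_contains12Bar3_of_subsingleton (by simp)⟩

lemma card_avoiders_image {e : α → β} (he : StrictMonoOn e S) :
    (avoiders (S.image e)).card = (avoiders S).card := by
  obtain _ | _ := isEmpty_or_nonempty α
  · simp [eq_empty_of_isEmpty S, avoiders_empty]
  set e' := Function.invFunOn e S
  have hleft : Set.LeftInvOn e' e S := he.injOn.leftInvOn_invFunOn
  have hright : Set.LeftInvOn e e' ↑(S.image e) := by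
    rw [coe_image]
    rintro _ ⟨x, hx, rfl⟩
    exact Function.invFunOn_eq ⟨x, hx, rfl⟩
  symm
  refine card_bij (fun P _ => P.image (image e)) (fun P hP => ?_) (fun P₁ hP₁ P₂ hP₂ h => ?_)
    (fun Q hQ => ?_)
  · obtain ⟨hP, hav⟩ := mem_avoiders.1 hP
    exact mem_avoiders.2 ⟨hP.image he.injOn, by rwa [contains12Bar3_image_iff he hP]⟩
  · rw [← image_image_image_of_leftInvOn hleft fun B => (mem_avoiders.1 hP₁).1.subset, h,
      image_image_image_of_leftInvOn hleft fun B => (mem_avoiders.1 hP₂).1.subset]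
  · obtain ⟨hQ, hav⟩ := mem_avoiders.1 hQ
    have hP : IsSetPartition S (Q.image (image e')) := by
      have := hQ.image (Function.invFunOn_injOn_image e ↑S |>.mono (by simp))
      rwa [image_image_of_leftInvOn hleft] at this
    have hQe : (Q.image (image e')).image (image e) = Q :=
      image_image_image_of_leftInvOn hright fun B => hQ.subset
    refine ⟨Q.image (image e'), mem_avoiders.2 ⟨hP, ?_⟩, hQe⟩
    rwa [← contains12Bar3_image_iff he hP, hQe]

end Avoiders

lemma avoiders_singleton [LinearOrder α] (x : α) : avoiders {x} = {{{x}}} := by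
  ext P
  rw [mem_avoiders, mem_singleton]
  constructor
  · rintro ⟨hP, -⟩
    obtain ⟨B, hB, hxB⟩ := hP.exists_mem (mem_singleton_self x)
    have hBx : B = {x} :=
      eq_singleton_iff_unique_mem.2 ⟨hxB, fun y hy => mem_singleton.1 (hP.subset hB hy)⟩
    exact hP.eq_singleton_of_mem (hBx ▸ hB)
  · rintro rfl
    exact ⟨.singleton (singleton_nonempty x), not_contains12Bar3_of_subsingleton (by simp)⟩

lemma a_eq_card_avoiders (n : ℕ) : a n = (avoiders (Icc 1 n)).card := by
  rw [a, ← Set.ncard_coe_finset]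
  have hbij : Set.BijOn SetPartition.blocks {σ : SetPartition n | ¬ σ.Contains12Bar3}
      (avoiders (Icc 1 n)) := by
    refine ⟨fun σ hσ => mem_avoiders.2 ⟨⟨σ.nonempty_mem, σ.disj, σ.cover⟩, hσ⟩,
      fun σ _ τ _ h => ?_, fun P hP => ?_⟩
    · cases σ; cases τ; simpa using h
    · obtain ⟨⟨hne, hdisj, hsup⟩, hav⟩ := mem_avoiders.1 hP
      exact ⟨⟨P, hne, hdisj, hsup⟩, hav, rfl⟩
  rw [← hbij.image_eq, hbij.injOn.ncard_image]

lemma card_avoiders (S : Finset ℕ) : (avoiders S).card = a S.card := by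
  set e : ℕ → ℕ := fun i => if h : i - 1 < S.card then S.orderEmbOfFin rfl ⟨i - 1, h⟩ else 0
  have he_apply : ∀ i (hi : i ∈ Icc 1 S.card), e i = S.orderEmbOfFin rfl
      ⟨i - 1, by rw [mem_Icc] at hi; omega⟩ :=
    fun i hi => dif_pos _
  have he : StrictMonoOn e (Icc 1 S.card) := by
    intro i hi j hj hij
    rw [he_apply i hi, he_apply j hj]
    refine (S.orderEmbOfFin rfl).strictMono (Fin.mk_lt_mk.2 ?_)
    simp only [coe_Icc, Set.mem_Icc] at hi hj
    omega
  have him : (Icc 1 S.card).image e = S := by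
    refine eq_of_subset_of_card_le (fun x hx => ?_) ?_
    · obtain ⟨i, hi, rfl⟩ := mem_image.1 hx
      rw [he_apply i hi]
      exact orderEmbOfFin_mem S rfl _
    · rw [card_image_of_injOn he.injOn, Nat.card_Icc, Nat.add_sub_cancel]
  rw [a_eq_card_avoiders, ← card_avoiders_image he, him]

lemma a_zero : a 0 = 1 := by
  rw [a_eq_card_avoiders, Icc_eq_empty (by norm_num), avoiders_empty, card_singleton]

lemma a_one : a 1 = 1 := by
  rw [a_eq_card_avoiders, Icc_self, avoiders_singleton, card_singleton]

lemma card_filter_singleton_one_mem {n : ℕ} (hn : 1 ≤ n) :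
    ((avoiders (Icc 1 n)).filter ({1} ∈ ·)).card = a (n - 1) := by
  have hsplit : {1} ∪ Icc 2 n = Icc 1 n := by ext; simp; omega
  have hgt : ∀ {Q}, IsSetPartition (Icc 2 n) Q → ∀ D ∈ Q, ∀ y ∈ D, 1 < y := fun hQ D hD y hy =>
    (mem_Icc.1 (hQ.subset hD hy)).1
  rw [show n - 1 = (Icc 2 n).card by simp, ← card_avoiders]
  refine card_nbij' (·.erase {1}) (insert {1} ·) (fun P hP => ?_) (fun Q hQ => ?_)
    (fun P hP => insert_erase (mem_filter.1 hP).2) (fun Q hQ => erase_insert fun h1 => ?_)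
  · obtain ⟨⟨hP, hav⟩, h1⟩ := mem_filter.1 hP |>.imp_left mem_avoiders.1
    have hP' : IsSetPartition (Icc 2 n) (P.erase {1}) := by
      convert hP.erase h1
      ext; simp; omega
    refine mem_avoiders.2 ⟨hP', fun hc => hav ?_⟩
    rwa [← insert_erase h1, contains12Bar3_insert_singleton_iff (hgt hP')]
  · obtain ⟨hQ, hav⟩ := mem_avoiders.1 hQ
    refine mem_filter.2 ⟨mem_avoiders.2 ⟨?_, ?_⟩, mem_insert_self _ _⟩
    · rw [← hsplit]
      exact hQ.insert (singleton_nonempty 1) (by simp)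
    · rwa [contains12Bar3_insert_singleton_iff (hgt hQ)]
  · exact (hgt (mem_avoiders.1 hQ).1 {1} h1 1 (mem_singleton_self 1)).false

/-- The minimum `m` of the block after `B` is `2`, else `1 < 2 < m` is a copy of `12|3`; an
element `x > 2` of that block would form a copy with any `t ∈ B \ {1}`, as `1 < t < x` or as
`2 < x < t`. -/
lemma singleton_two_mem {n : ℕ} (hn : 2 ≤ n) {P : Finset (Finset ℕ)} {B : Finset ℕ}
    (hP : IsSetPartition (Icc 1 n) P) (hav : ¬ Contains12Bar3 P) (hB : B ∈ P) (h1B : 1 ∈ B)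
    (hB1 : B ≠ {1}) (hBS : B ≠ Icc 1 n) : {2} ∈ P := by
  have hcompl : (Icc 1 n \ B).Nonempty :=
    sdiff_nonempty.2 fun h => hBS (subset_antisymm (hP.subset hB) h)
  set m := (Icc 1 n \ B).min' hcompl
  have hm : IsLeast ↑(Icc 1 n \ B) m := isLeast_min' _ hcompl
  obtain ⟨hmS, hmB⟩ := mem_sdiff.1 hm.1
  obtain ⟨C, hC, hmC⟩ := hP.exists_mem hmS
  have hm1 : 1 < m := by
    have := (mem_Icc.1 hmS).1
    exact lt_of_le_of_ne this fun h => hmB (h ▸ h1B)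
  have hadj : IsAdjacent P B C :=
    hP.isAdjacent_of_isLeast hB hC hmC hm ((min_le h1B).trans_lt (WithTop.coe_lt_coe.2 hm1))
  have hCB : C ≠ B := fun h => hmB (h ▸ hmC)
  have hCm : ∀ x ∈ C, m ≤ x := fun x hx => hm.2 <| mem_coe.2 <|
    mem_sdiff.2 ⟨hP.subset hC hx, fun hxB => hCB (hP.eq_of_mem_of_mem hC hB hx hxB)⟩
  have hm2 : m = 2 := by
    by_contra hm2
    have h2B : 2 ∈ B := by
      by_contra h2B
      exact hm2 (le_antisymm (hm.2 (by simp [h2B]; omega)) hm1)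
    exact hav ⟨B, C, Or.inl hadj, 1, h1B, 2, h2B, m, hmC, one_lt_two, by omega⟩
  obtain ⟨t, htB, ht1⟩ : ∃ t ∈ B, t ≠ 1 := by
    by_contra! h
    exact hB1 (eq_singleton_iff_unique_mem.2 ⟨h1B, h⟩)
  have ht2 : 2 < t := by
    have := (mem_Icc.1 (hP.subset hB htB)).1
    have : t ≠ 2 := fun h => hmB (hm2 ▸ h ▸ htB)
    omega
  refine hm2 ▸ (eq_singleton_iff_unique_mem.2 ⟨hmC, fun x hx => ?_⟩ : C = {m}) ▸ hC
  by_contra hxm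
  have hmx : m < x := lt_of_le_of_ne (hCm x hx) (Ne.symm hxm)
  have hxt : x ≠ t := fun h => hCB (hP.eq_of_mem_of_mem hC hB hx (h ▸ htB))
  rcases lt_or_gt_of_ne hxt with hxt | htx
  · exact hav ⟨C, B, Or.inr hadj, m, hmC, x, hx, t, htB, hmx, hxt⟩
  · exact hav ⟨B, C, Or.inl hadj, 1, h1B, t, htB, x, hx, by omega, htx⟩

def prependBlocks (T : Finset ℕ) (Q : Finset (Finset ℕ)) : Finset (Finset ℕ) :=
  insert (insert 1 T) (insert {2} Q)

section PrependBlocks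

variable {T T' : Finset ℕ} {Q Q' : Finset (Finset ℕ)}

lemma contains12Bar3_prependBlocks_iff (hT : ∀ x ∈ T, 2 < x) (hQ : ∀ D ∈ Q, ∀ y ∈ D, 2 < y) :
    Contains12Bar3 (prependBlocks T Q) ↔ Contains12Bar3 Q := by
  have hB : ∀ x ∈ insert 1 T, x = 1 ∨ 2 < x := fun x hx =>
    (mem_insert.1 hx).imp_right (hT x)
  have hBmin : (insert 1 T).min ≤ (1 : ℕ) := min_le (mem_insert_self 1 T)
  have h2Q : ∀ D ∈ insert {2} Q, ∀ y ∈ D, 2 ≤ y := by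
    simp only [mem_insert, forall_eq_or_imp, mem_singleton, forall_eq, le_refl, true_and]
    exact fun D hD y hy => (hQ D hD y hy).le
  rw [prependBlocks, contains12Bar3_insert_iff, contains12Bar3_insert_singleton_iff hQ]
  · intro D hD
    exact hBmin.trans_lt <| coe_lt_min_iff.2 fun y hy => one_lt_two.trans_le (h2Q D hD y hy)
  · intro C hC hadj
    obtain rfl | hCQ := mem_insert.1 hC
    · refine ⟨?_, not_forms12_3_singleton_left 2 _⟩
      rintro ⟨a, ha, b, hb, c, hc, hab, hbc⟩
      rw [mem_singleton] at hc
      rcases hB a ha with rfl | h <;> rcases hB b hb with rfl | h' <;> omega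
    · refine absurd ⟨?_, ?_⟩ (hadj.2.2.2 {2} (mem_insert_of_mem (mem_insert_self _ _)))
      · rw [min_singleton]
        exact hBmin.trans_lt (WithTop.coe_lt_coe.2 one_lt_two)
      · rw [min_singleton, coe_lt_min_iff]
        exact hQ C hCQ

lemma prependBlocks_mem_avoiders {n : ℕ} (hn : 2 ≤ n) (hT : T ⊆ Icc 3 n)
    (hQ : Q ∈ avoiders (Icc 3 n \ T)) : prependBlocks T Q ∈ avoiders (Icc 1 n) := by
  obtain ⟨hQ, hav⟩ := mem_avoiders.1 hQ
  have hT3 : ∀ x ∈ T, 3 ≤ x ∧ x ≤ n := fun x hx => mem_Icc.1 (hT hx)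
  refine mem_avoiders.2 ⟨?_, ?_⟩
  · rw [prependBlocks]
    have hP := (hQ.insert (singleton_nonempty 2) (by simp)).insert (insert_nonempty 1 T)
      (by simp [disjoint_left]; grind)
    convert hP using 1
    ext x
    simp only [mem_union, mem_insert, mem_singleton, mem_sdiff, mem_Icc]
    by_cases hx : x ∈ T
    · have := hT3 x hx
      simp [hx]; omega
    · simp [hx]; omega
  · rwa [contains12Bar3_prependBlocks_iff (fun x hx => (hT3 x hx).1)
      fun D hD y hy => (mem_Icc.1 (mem_sdiff.1 (hQ.subset hD hy)).1).1]

lemma filter_one_mem_prependBlocks (hQ : ∀ D ∈ Q, ∀ y ∈ D, 2 < y) :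
    (prependBlocks T Q).filter (1 ∈ ·) = {insert 1 T} := by
  rw [prependBlocks, filter_insert, if_pos (mem_insert_self 1 T), filter_insert,
    if_neg (by simp), filter_false_of_mem fun D hD h1 => (hQ D hD 1 h1).not_gt one_lt_two]
  rfl

lemma filter_one_two_notMem_prependBlocks (hQ : ∀ D ∈ Q, ∀ y ∈ D, 2 < y) :
    (prependBlocks T Q).filter (fun D => 1 ∉ D ∧ 2 ∉ D) = Q := by
  rw [prependBlocks, filter_insert, if_neg (by simp), filter_insert, if_neg (by simp),
    filter_true_of_mem fun D hD => ⟨fun h => (hQ D hD 1 h).not_gt one_lt_two,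
      fun h => (hQ D hD 2 h).false⟩]

lemma prependBlocks_inj (hT : 1 ∉ T) (hT' : 1 ∉ T') (hQ : ∀ D ∈ Q, ∀ y ∈ D, 2 < y)
    (hQ' : ∀ D ∈ Q', ∀ y ∈ D, 2 < y) (h : prependBlocks T Q = prependBlocks T' Q') :
    T = T' ∧ Q = Q' := by
  have h1 := congrArg (·.filter (1 ∈ ·)) h
  simp only [filter_one_mem_prependBlocks hQ, filter_one_mem_prependBlocks hQ',
    singleton_inj] at h1
  refine ⟨?_, ?_⟩
  · rw [← erase_insert hT, h1, erase_insert hT']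
  · rw [← filter_one_two_notMem_prependBlocks (T := T) hQ, h, filter_one_two_notMem_prependBlocks hQ']

lemma singleton_one_notMem_prependBlocks (hT : T.Nonempty) (h1T : 1 ∉ T)
    (hQ : ∀ D ∈ Q, ∀ y ∈ D, 2 < y) : {1} ∉ prependBlocks T Q := fun h => by
  have hB : {1} = insert 1 T := mem_singleton.1 <|
    filter_one_mem_prependBlocks hQ ▸ mem_filter.2 ⟨h, mem_singleton_self 1⟩
  obtain ⟨t, ht⟩ := hT
  exact h1T (mem_singleton.1 (hB ▸ mem_insert_of_mem ht) ▸ ht)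

lemma prependBlocks_ne_singleton {S : Finset ℕ} (h1S : 1 ∈ S) : prependBlocks T Q ≠ {S} := by
  intro h
  have h2 : {2} ∈ prependBlocks T Q := mem_insert_of_mem (mem_insert_self _ _)
  rw [h, mem_singleton] at h2
  exact absurd (h2 ▸ h1S) (by simp)

end PrependBlocks

lemma exists_eq_prependBlocks {n : ℕ} (hn : 2 ≤ n) {P : Finset (Finset ℕ)}
    (hPa : P ∈ avoiders (Icc 1 n)) (h1 : {1} ∉ P) (hPS : P ≠ {Icc 1 n}) :
    ∃ T ⊆ Icc 3 n, T.Nonempty ∧ ∃ Q ∈ avoiders (Icc 3 n \ T), P = prependBlocks T Q := by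
  obtain ⟨hP, hav⟩ := mem_avoiders.1 hPa
  obtain ⟨B, hB, h1B⟩ := hP.exists_mem (mem_Icc.2 ⟨le_rfl, by omega⟩ : 1 ∈ Icc 1 n)
  have hB1 : B ≠ {1} := by rintro rfl; exact h1 hB
  have h2 := singleton_two_mem hn hP hav hB h1B hB1 fun h => hPS (hP.eq_singleton_of_mem (h ▸ hB))
  have h2B : 2 ∉ B := fun h2B => by
    have := hP.eq_of_mem_of_mem hB h2 h2B (mem_singleton_self 2)
    exact absurd (mem_singleton.1 (this ▸ h1B)) (by omega)
  set T := B.erase 1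
  have hBT : insert 1 T = B := insert_erase h1B
  have hT : T ⊆ Icc 3 n := fun x hx => by
    obtain ⟨hx1, hxB⟩ := mem_erase.1 hx
    have := mem_Icc.1 (hP.subset hB hxB)
    have : x ≠ 2 := fun h => h2B (h ▸ hxB)
    exact mem_Icc.2 ⟨by omega, by omega⟩
  have hTne : T.Nonempty := by
    rw [nonempty_iff_ne_empty]
    rintro hT
    exact hB1 (by rw [← hBT, hT]; rfl)
  set Q := (P.erase B).erase {2}
  have h2P : {2} ∈ P.erase B := mem_erase.2 ⟨fun h => h2B (h ▸ mem_singleton_self 2), h2⟩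
  have hQ : IsSetPartition (Icc 3 n \ T) Q := by
    convert (hP.erase hB).erase h2P using 1
    rw [← hBT]
    ext x
    by_cases hx : x ∈ T <;> simp [hx]; omega
  have hPQ : P = prependBlocks T Q := by rw [prependBlocks, hBT, insert_erase h2P, insert_erase hB]
  refine ⟨T, hT, hTne, Q, mem_avoiders.2 ⟨hQ, fun hc => hav ?_⟩, hPQ⟩
  rwa [hPQ, contains12Bar3_prependBlocks_iff (fun x hx => (mem_Icc.1 (hT hx)).1)
    fun D hD y hy => (mem_Icc.1 (mem_sdiff.1 (hQ.subset hD hy)).1).1]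

lemma sum_powerset_filter_nonempty {M : Type*} [AddCommMonoid M] (X : Finset α) (f : ℕ → M) :
    ∑ T ∈ X.powerset with T.Nonempty, f T.card = ∑ k ∈ Icc 1 X.card, X.card.choose k • f k := by
  rw [← sum_fiberwise_of_maps_to (g := card) (t := Icc 1 X.card) fun T hT => by
    obtain ⟨hTX, hT⟩ := mem_filter.1 hT
    exact mem_Icc.2 ⟨card_pos.2 hT, card_le_card (mem_powerset.1 hTX)⟩]
  refine sum_congr rfl fun k hk => ?_
  have hfiber : {T ∈ X.powerset | T.Nonempty ∧ T.card = k} = powersetCard k X := by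
    rw [powersetCard_eq_filter]
    refine filter_congr fun T _ => and_iff_right_of_imp fun h => card_pos.1 ?_
    rw [h]
    exact (mem_Icc.1 hk).1
  rw [filter_filter, sum_congr rfl fun T hT => by rw [(mem_filter.1 hT).2.2], sum_const, hfiber,
    card_powersetCard]

lemma card_filter_eq_sum_powerset {n : ℕ} (hn : 2 ≤ n) :
    ((avoiders (Icc 1 n)).filter fun P => {1} ∉ P ∧ P ≠ {Icc 1 n}).card =
      ∑ T ∈ (Icc 3 n).powerset with T.Nonempty, a (n - 2 - T.card) := by
  have hgt : ∀ {T Q}, Q ∈ avoiders (Icc 3 n \ T) → ∀ D ∈ Q, ∀ y ∈ D, 2 < y :=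
    fun hQ D hD y hy => (mem_Icc.1 (mem_sdiff.1 ((mem_avoiders.1 hQ).1.subset hD hy)).1).1
  have h1T : ∀ {T}, T ⊆ Icc 3 n → 1 ∉ T := fun hT h => by have := mem_Icc.1 (hT h); omega
  calc _ = (((Icc 3 n).powerset.filter (·.Nonempty)).sigma
        fun T => avoiders (Icc 3 n \ T)).card := by
        refine (card_bij (fun x _ => prependBlocks x.1 x.2) (fun x hx => ?_)
          (fun x hx y hy h => ?_) (fun P hP => ?_)).symm
        · obtain ⟨T, Q⟩ := x
          simp only [mem_sigma, mem_filter, mem_powerset] at hx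
          obtain ⟨⟨hT, hTne⟩, hQ⟩ := hx
          exact mem_filter.2 ⟨prependBlocks_mem_avoiders hn hT hQ,
            singleton_one_notMem_prependBlocks hTne (h1T hT) (hgt hQ),
            prependBlocks_ne_singleton (mem_Icc.2 ⟨le_rfl, by omega⟩)⟩
        · obtain ⟨T, Q⟩ := x
          obtain ⟨T', Q'⟩ := y
          simp only [mem_sigma, mem_filter, mem_powerset] at hx hy
          obtain ⟨rfl, rfl⟩ := prependBlocks_inj (h1T hx.1.1) (h1T hy.1.1) (hgt hx.2) (hgt hy.2) h
          rfl
        · obtain ⟨hP, h1, hPS⟩ := mem_filter.1 hP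
          obtain ⟨T, hT, hTne, Q, hQ, rfl⟩ := exists_eq_prependBlocks hn hP h1 hPS
          exact ⟨⟨T, Q⟩, mem_sigma.2 ⟨mem_filter.2 ⟨mem_powerset.2 hT, hTne⟩, hQ⟩, rfl⟩
    _ = _ := by
        rw [card_sigma]
        refine sum_congr rfl fun T hT => ?_
        rw [card_avoiders, card_sdiff_of_subset (mem_powerset.1 (mem_filter.1 hT).1),
          Nat.card_Icc]
        rfl

lemma card_filter_singleton_one_notMem {n : ℕ} (hn : 2 ≤ n) :
    ((avoiders (Icc 1 n)).filter ({1} ∉ ·)).card =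
      1 + ∑ k ∈ Icc 1 (n - 2), (n - 2).choose k * a (n - k - 2) := by
  have hS : {Icc 1 n} ∈ avoiders (Icc 1 n) := mem_avoiders.2
    ⟨.singleton (nonempty_Icc.2 (by omega)), not_contains12Bar3_of_subsingleton (by simp)⟩
  have hS1 : ({1} : Finset ℕ) ∉ ({Icc 1 n} : Finset (Finset ℕ)) := by
    rw [mem_singleton, eq_comm, ← coe_inj]
    simp [Set.Icc_eq_singleton_iff]
    omega
  have hsingle : ((avoiders (Icc 1 n)).filter fun P => {1} ∉ P ∧ P = {Icc 1 n}) = {{Icc 1 n}} := by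
    ext P
    simp only [mem_filter, mem_singleton]
    exact ⟨fun h => h.2.2, by rintro rfl; exact ⟨hS, hS1, rfl⟩⟩
  rw [← card_filter_add_card_filter_not (p := (· = {Icc 1 n})), filter_filter, filter_filter,
    hsingle, card_singleton, card_filter_eq_sum_powerset hn,
    sum_powerset_filter_nonempty _ fun k => a (n - 2 - k), Nat.card_Icc]
  simp only [smul_eq_mul, Nat.sub_right_comm n 2, show n + 1 - 3 = n - 2 by omega]

theorem stmt17 :
    a 0 = 1 ∧ a 1 = 1 ∧
    ∀ n : ℕ, 2 ≤ n →
      a n = a (n - 1) + 1 +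
        ∑ k ∈ Finset.Icc 1 (n - 2), Nat.choose (n - 2) k * a (n - k - 2) := by
  refine ⟨a_zero, a_one, fun n hn => ?_⟩
  rw [a_eq_card_avoiders, ← card_filter_add_card_filter_not (p := ({1} ∈ ·)),
    card_filter_singleton_one_mem (by omega), card_filter_singleton_one_notMem hn, add_assoc]
end

section
/- For any partition σ of [n], the inversion number of σ equals the number of triples (a, b, c) with a, b in a common block B_i of σ, c in a different block B_j, a = min B_i, c = min B_j, a < c < b. (That is, inv(σ) equals the number of copies of the generalized pattern 1̂3/2̂ where both the '1' and the '2' are block minima.) -/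
open Finset

/-- `(b, C)` is an inversion of `σ`: `b` lies in a block strictly before `C`
(in the canonical order by minima) and `b > min C`. -/
def SetPartition.IsInversion {n : ℕ} (σ : SetPartition n) (b : ℕ) (C : Finset ℕ) : Prop :=
  C ∈ σ.blocks ∧ ∃ B ∈ σ.blocks, b ∈ B ∧ B.min < C.min ∧ C.min < (b : WithTop ℕ)

/-- The inversion number of `σ`. -/
noncomputable def SetPartition.inv {n : ℕ} (σ : SetPartition n) : ℕ :=
  ({p : ℕ × Finset ℕ | σ.IsInversion p.1 p.2}).ncard

noncomputable def blockOf {n : ℕ} (σ : SetPartition n) (c : ℕ) : Finset ℕ :=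
  if h : ∃ B, B ∈ σ.blocks ∧ c ∈ B then h.choose else ∅

lemma block_unique {n : ℕ} (σ : SetPartition n) {B C : Finset ℕ} (hB : B ∈ σ.blocks)
    (hC : C ∈ σ.blocks) {x : ℕ} (hxB : x ∈ B) (hxC : x ∈ C) : B = C := by
  by_contra hne
  exact (σ.disj B hB C hC hne).forall_ne_finset hxB hxC rfl

lemma blockOf_eq {n : ℕ} (σ : SetPartition n) {B : Finset ℕ} (hB : B ∈ σ.blocks)
    {c : ℕ} (hc : c ∈ B) : blockOf σ c = B := by
  have h : ∃ B, B ∈ σ.blocks ∧ c ∈ B := ⟨B, hB, hc⟩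
  rw [blockOf, dif_pos h]
  exact block_unique σ h.choose_spec.1 hB h.choose_spec.2 hc

theorem stmt19 (n : ℕ) (σ : SetPartition n) :
    σ.inv =
      ({t : ℕ × ℕ × ℕ | ∃ B ∈ σ.blocks, ∃ C ∈ σ.blocks, B ≠ C ∧
          t.1 ∈ B ∧ t.2.1 ∈ B ∧ t.2.2 ∈ C ∧
          (t.1 : WithTop ℕ) = B.min ∧ (t.2.2 : WithTop ℕ) = C.min ∧
          t.1 < t.2.2 ∧ t.2.2 < t.2.1}).ncard := by

  classical
  set T : Set (ℕ × ℕ × ℕ) := {t : ℕ × ℕ × ℕ | ∃ B ∈ σ.blocks, ∃ C ∈ σ.blocks, B ≠ C ∧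
          t.1 ∈ B ∧ t.2.1 ∈ B ∧ t.2.2 ∈ C ∧
          (t.1 : WithTop ℕ) = B.min ∧ (t.2.2 : WithTop ℕ) = C.min ∧
          t.1 < t.2.2 ∧ t.2.2 < t.2.1} with hT
  set h : ℕ × ℕ × ℕ → ℕ × Finset ℕ := fun t => (t.2.1, blockOf σ t.2.2) with hh
  have himg : {p : ℕ × Finset ℕ | σ.IsInversion p.1 p.2} = h '' T := by
    ext ⟨b, C⟩
    constructor
    · rintro ⟨hC, B, hB, hbB, hmin, hCb⟩
      have hBne : B.Nonempty := σ.nonempty_mem B hB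
      have hCne : C.Nonempty := σ.nonempty_mem C hC
      set a := B.min' hBne with ha
      set c := C.min' hCne with hc
      have haB : (a : WithTop ℕ) = B.min := B.coe_min' hBne
      have hcC : (c : WithTop ℕ) = C.min := C.coe_min' hCne
      have hac : a < c := by
        have := hmin; rw [← haB, ← hcC] at this; exact_mod_cast this
      have hcb : c < b := by
        have := hCb; rw [← hcC] at this; exact_mod_cast this
      have hBC : B ≠ C := by
        rintro rfl; exact lt_irrefl _ hmin
      refine ⟨(a, b, c), ⟨B, hB, C, hC, hBC, B.min'_mem hBne, hbB, C.min'_mem hCne,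
        haB, hcC, hac, hcb⟩, ?_⟩
      simp only [hh]
      rw [blockOf_eq σ hC (C.min'_mem hCne)]
    · rintro ⟨⟨a, b', c⟩, ⟨B, hB, C', hC', hBC, haB, hbB, hcC, hamin, hcmin, hac, hcb⟩, heq⟩
      simp only [hh, Prod.mk.injEq] at heq
      obtain ⟨rfl, hCeq⟩ := heq
      rw [blockOf_eq σ hC' hcC] at hCeq
      subst hCeq
      refine ⟨hC', B, hB, hbB, ?_, ?_⟩
      · rw [← hamin, ← hcmin]; exact_mod_cast hac
      · rw [← hcmin]; exact_mod_cast hcb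
  have hinj : Set.InjOn h T := by
    rintro ⟨a, b, c⟩ ⟨B, hB, C, hC, hBC, haB, hbB, hcC, hamin, hcmin, hac, hcb⟩
      ⟨a', b', c'⟩ ⟨B', hB', C', hC', hBC', haB', hbB', hcC', hamin', hcmin', hac', hcb'⟩ heq
    simp only [hh, Prod.mk.injEq] at heq
    obtain ⟨rfl, hCeq⟩ := heq
    rw [blockOf_eq σ hC hcC, blockOf_eq σ hC' hcC'] at hCeq
    subst hCeq
    have hcc : c = c' := by
      have : (c : WithTop ℕ) = (c' : WithTop ℕ) := by rw [hcmin, hcmin']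
      exact_mod_cast this
    have hBB : B = B' := block_unique σ hB hB' hbB hbB'
    subst hBB
    have haa : a = a' := by
      have : (a : WithTop ℕ) = (a' : WithTop ℕ) := by rw [hamin, hamin']
      exact_mod_cast this
    simp [haa, hcc]
  rw [SetPartition.inv, himg, Set.ncard_image_of_injOn hinj]
end
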